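/- If (X₁, X₂) has the joint CDF F(x₁, x₂) = exp(λ₁(g(x₁)−g(b)) + λ₂(g(x₂)−g(b)) + λ₁₂ max(g(x₁)−g(b), g(x₂)−g(b))), then X₁ and X₂ are independent (i.e., F(x₁, x₂) = F(x₁, b)·F(b, x₂) for all x₁, x₂) if and only if λ₁₂ = 0. -/

import Mathlib

open Real

lemma exp_mul_max_eq_mul_iff (l₁ l₂ c u v : ℝ) :
    exp (l₁ * u + l₂ * v + c * max u v)
        = exp (l₁ * u + l₂ * 0 + c * max u 0) * exp (l₁ * 0 + l₂ * v + c * max 0 v)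
      ↔ c * max u v = c * (max u 0 + max 0 v) := by
  rw [← exp_add, exp_eq_exp]
  constructor <;> intro h <;> linarith

theorem independence_iff_lambda12_zero_general
    (a b : ℝ) (hab : a < b)
    (g : ℝ → ℝ) (hg_mono : StrictMonoOn g (Set.Ioc a b))
    (lam₁ lam₂ lam₁₂ : ℝ)
    (F : ℝ → ℝ → ℝ)
    (hF : ∀ x₁ x₂ : ℝ, F x₁ x₂ =
      Real.exp (lam₁ * (g x₁ - g b) + lam₂ * (g x₂ - g b)
        + lam₁₂ * max (g x₁ - g b) (g x₂ - g b))) :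
    (∀ x₁ ∈ Set.Ioo a b, ∀ x₂ ∈ Set.Ioo a b, F x₁ x₂ = F x₁ b * F b x₂)
      ↔ lam₁₂ = 0 := by
  have hfactor : ∀ x₁ x₂, F x₁ x₂ = F x₁ b * F b x₂ ↔
      lam₁₂ * max (g x₁ - g b) (g x₂ - g b)
        = lam₁₂ * (max (g x₁ - g b) 0 + max 0 (g x₂ - g b)) := fun x₁ x₂ => by
    rw [hF, hF, hF, sub_self, exp_mul_max_eq_mul_iff]
  constructor
  · intro hind
    -- On the diagonal below `b` the two sides differ by `lam₁₂ * (g x - g b)` with `g x < g b`.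
    have hx : (a + b) / 2 ∈ Set.Ioo a b := ⟨by linarith, by linarith⟩
    have hneg : g ((a + b) / 2) - g b < 0 :=
      sub_neg.2 (hg_mono ⟨hx.1, hx.2.le⟩ ⟨hab, le_rfl⟩ hx.2)
    have hdiag := (hfactor _ _).1 (hind _ hx _ hx)
    rw [max_self, max_eq_right hneg.le, max_eq_left hneg.le, add_zero, mul_zero] at hdiag
    exact (mul_eq_zero.1 hdiag).resolve_right hneg.ne
  · rintro rfl x₁ - x₂ -
    exact (hfactor x₁ x₂).2 (by simp only [zero_mul])

/-- Remark 3.1: for the joint CDF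
`F x₁ x₂ = exp (λ₁(g x₁ - g b) + λ₂(g x₂ - g b) + λ₁₂ max (g x₁ - g b) (g x₂ - g b))`
with `g` strictly increasing on `(a, b]` and `a < b`, the coordinates are
independent — i.e. `F x₁ x₂ = F x₁ b * F b x₂` for all `x₁, x₂ ∈ (a, b)` —
if and only if `λ₁₂ = 0`. -/
theorem independence_iff_lambda12_zero
    (a b : ℝ) (hab : a < b)
    (g : ℝ → ℝ) (hg_mono : StrictMonoOn g (Set.Ioc a b))
    (lam₁ lam₂ lam₁₂ : ℝ) (h₁ : 0 < lam₁) (h₂ : 0 < lam₂) (h₁₂ : 0 ≤ lam₁₂)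
    (F : ℝ → ℝ → ℝ)
    (hF : ∀ x₁ x₂ : ℝ, F x₁ x₂ =
      Real.exp (lam₁ * (g x₁ - g b) + lam₂ * (g x₂ - g b)
        + lam₁₂ * max (g x₁ - g b) (g x₂ - g b))) :
    (∀ x₁ ∈ Set.Ioo a b, ∀ x₂ ∈ Set.Ioo a b, F x₁ x₂ = F x₁ b * F b x₂)
      ↔ lam₁₂ = 0 :=
  independence_iff_lambda12_zero_general a b hab g hg_mono lam₁ lam₂ lam₁₂ F hF
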